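/- arXiv:1102.1135 — 3 statements merged into one kernel-verified Lean document; each statement's English description precedes it below -/
import Mathlib

section
/- Let T ∈ ℕ and let α ∈ Σ² be a periodic point of the Bernoulli shift σ with minimal period T₁ satisfying 2 < T₁ ≤ T (so the period word of α contains both symbols 0 and 1). Let ω₃ be a word of length T₃ with T₃ ≤ T₁ which is the minimal-period word of a periodic sequence whose σ-orbit is disjoint from O(α,σ). Let m > 4T, and let a₁ and a₂ be words of length greater than 4T in each of which every maximal run of consecutive zeros has length at least T (the words are allowed to contain no zeros at all). Let β ∈ Σ² be the periodic sequence obtained by periodic repetition of the word a₁ ω₃ ω₃ … ω₃ a₂, where ω₃ is repeated exactly m times. Then for all integers k and l there exists an integer j with −2T₁ ≤ j ≤ 2T₁ − 1 such that β_{k+j} ≠ α_{l+j}; i.e., the orbit of β does not meet the union over 0 ≤ l < T₁ of the cylinders {ω ∈ Σ² : ω_j = (σ^l α)_j for all −2T₁ ≤ j ≤ 2T₁ − 1}. -/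
noncomputable section

/-- `shiftZ n ω` is the `n`-th iterate `σⁿ ω` of the Bernoulli shift `(σω)_k = ω_{k+1}`. -/
def shiftZ (n : ℤ) (ω : ℤ → Bool) : ℤ → Bool := fun k => ω (k + n)

/-- The orbit `O(ω,σ) = {σᵏω : k ∈ ℤ}`. -/
def orbitShift (ω : ℤ → Bool) : Set (ℤ → Bool) := Set.range fun n : ℤ => shiftZ n ω

/-- `α` is periodic with minimal period `T`. -/
def IsMinPeriod (T : ℕ) (α : ℤ → Bool) : Prop :=
  0 < T ∧ shiftZ (T : ℤ) α = α ∧ ∀ t : ℕ, 0 < t → t < T → shiftZ (t : ℤ) α ≠ α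

/-- The two-sided sequence obtained by periodic repetition of the word `L`
(`false ↔ 0`, `true ↔ 1`). -/
def periodicOfList (L : List Bool) : ℤ → Bool :=
  fun k => L.getD (k % (L.length : ℤ)).toNat false

/-- In the word `a`, every maximal run of consecutive zeros (`false`) has length at
least `T`.  (A word with no zeros at all satisfies this vacuously.) -/
def RunsOK (T : ℕ) (a : List Bool) : Prop :=
  ∀ i l : ℕ, 0 < l → i + l ≤ a.length →
    (∀ j : ℕ, j < l → a.getD (i + j) false = false) →
    (i = 0 ∨ a.getD (i - 1) false = true) →
    (i + l = a.length ∨ a.getD (i + l) false = true) →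
    T ≤ l

/-! A window of length `4T₁` of `β` contains a window of length `2T₁` inside a single copy of
`a₁`, of `ω₃ᵐ` or of `a₂`. Inside a copy of `aᵢ` it cannot match `α`: every window of length
`2T₁` of the non-constant `T₁`-periodic `α` contains a maximal zero run `1 0ʳ 1` with
`0 < r < T₁ ≤ T`. Inside `ω₃ᵐ` it cannot either: sequences of periods `T₁` and `T₃` that agree
on `T₁ + T₃` consecutive places agree everywhere, so a shift of `α` would be a shift of the
periodic repetition of `ω₃`. -/

open Function Set

theorem Function.Periodic.eq_of_eqOn_Ico {α β : Type*} [AddCommGroup α] [LinearOrder α]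
    [IsOrderedAddMonoid α] [Archimedean α] {f g : α → β} {p q c : α}
    (hf : Periodic f p) (hg : Periodic g q) (hp : 0 < p) (hq : 0 < q)
    (h : EqOn f g (Ico c (c + (p + q)))) : f = g := by
  -- `f` is also `q`-periodic: move `x` and `x + q` together into `[c, c + p)`.
  have hfq : Periodic f q := fun x => by
    have hpair : Periodic (fun x => (f x, f (x + q))) p := fun x => by
      simp only [add_right_comm x p q, hf x, hf (x + q)]
    obtain ⟨y, ⟨hcy, hyc⟩, hxy⟩ := hpair.exists_mem_Ico hp x c
    simp only [Prod.ext_iff] at hxy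
    have hyp : y < c + (p + q) := hyc.trans (add_lt_add_right (lt_add_of_pos_right p hq) c)
    rw [hxy.1, hxy.2, h ⟨le_add_of_le_of_nonneg hcy hq.le, by
      rw [← add_assoc]; exact add_lt_add_left hyc q⟩, hg y, h ⟨hcy, hyp⟩]
  funext x
  obtain ⟨y, ⟨hcy, hyc⟩, hxy⟩ :=
    (show Periodic (fun x => (f x, g x)) q from fun x => by simp only [hfq x, hg x]).exists_mem_Ico
      hq x c
  simp only [Prod.ext_iff] at hxy
  rw [hxy.1, hxy.2, h ⟨hcy, hyc.trans (add_lt_add_right (lt_add_of_pos_left q hp) c)⟩]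

def IsZeroRun (f : ℤ → Bool) (x y : ℤ) : Prop :=
  f x = true ∧ f y = true ∧ x + 1 < y ∧ ∀ i, x < i → i < y → f i = false

theorem IsZeroRun.congr {f g : ℤ → Bool} {x y : ℤ} (h : IsZeroRun f x y)
    (hfg : EqOn f g (Icc x y)) : IsZeroRun g x y := by
  obtain ⟨hx, hy, hxy, hzero⟩ := h
  refine ⟨?_, ?_, hxy, fun i hxi hiy => ?_⟩
  · rwa [← hfg ⟨le_rfl, by omega⟩]
  · rwa [← hfg ⟨by omega, le_rfl⟩]
  · rw [← hfg ⟨hxi.le, hiy.le⟩, hzero i hxi hiy]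

theorem exists_isZeroRun_of_lt {f : ℤ → Bool} {a b z : ℤ} (ha : f a = true) (hb : f b = true)
    (hz : f z = false) (haz : a < z) (hzb : z < b) :
    ∃ x y, a ≤ x ∧ y ≤ b ∧ IsZeroRun f x y := by
  obtain ⟨x, ⟨hxz, hx⟩, hxmax⟩ := Int.exists_greatest_of_bdd (P := fun i => i < z ∧ f i = true)
    ⟨z, fun i hi => hi.1.le⟩ ⟨a, haz, ha⟩
  obtain ⟨y, ⟨hzy, hy⟩, hymin⟩ := Int.exists_least_of_bdd (P := fun i => z < i ∧ f i = true)
    ⟨z, fun i hi => hi.1.le⟩ ⟨b, hzb, hb⟩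
  refine ⟨x, y, hxmax a ⟨haz, ha⟩, hymin b ⟨hzb, hb⟩, hx, hy, by omega, fun i hxi hiy => ?_⟩
  rw [Bool.eq_false_iff]
  intro hi
  rcases lt_trichotomy i z with hiz | rfl | hzi
  · exact absurd (hxmax i ⟨hiz, hi⟩) (by omega)
  · rw [hz] at hi; exact Bool.false_ne_true hi
  · exact absurd (hymin i ⟨hzi, hi⟩) (by omega)

theorem Function.Periodic.exists_isZeroRun {f : ℤ → Bool} {p : ℤ} (hf : Periodic f p)
    (hp : 0 < p) (htrue : ∃ u, f u = true) (hfalse : ∃ v, f v = false) (s : ℤ) :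
    ∃ x y, s ≤ x ∧ y < s + 2 * p ∧ y - x ≤ p ∧ IsZeroRun f x y := by
  obtain ⟨u, hu⟩ := htrue
  obtain ⟨v, hv⟩ := hfalse
  obtain ⟨t, ⟨hst, hts⟩, hut⟩ := hf.exists_mem_Ico hp u s
  obtain ⟨z, ⟨htz, hzt⟩, hvz⟩ := hf.exists_mem_Ico hp v t
  rw [hu] at hut
  rw [hv] at hvz
  have htz' : t < z := lt_of_le_of_ne htz (by rintro rfl; rw [← hut] at hvz; simp at hvz)
  obtain ⟨x, y, htx, hyt, hrun⟩ :=
    exists_isZeroRun_of_lt hut.symm (by rw [hf t, ← hut]) hvz.symm htz' hzt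
  exact ⟨x, y, by omega, by omega, by omega, hrun⟩

theorem IsMinPeriod.exists_eq {T : ℕ} {α : ℤ → Bool} (hα : IsMinPeriod T α) (hT : 1 < T)
    (b : Bool) : ∃ u, α u = b := by
  by_contra! h
  refine hα.2.2 1 one_pos hT (funext fun k => ?_)
  have h₁ := h (k + 1)
  have h₀ := h k
  simp only [shiftZ, Nat.cast_one]
  cases b <;> simp_all

theorem not_eqOn_shiftZ_of_disjoint {α ω : ℤ → Bool} {p q : ℤ}
    (hdisj : Disjoint (orbitShift α) (orbitShift ω)) (hα : Periodic α p) (hω : Periodic ω q)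
    (hp : 0 < p) (hq : 0 < q) (e e' c : ℤ) :
    ¬ EqOn (shiftZ e α) (shiftZ e' ω) (Ico c (c + (p + q))) := fun h =>
  hdisj.ne_of_mem ⟨e, rfl⟩ ⟨e', rfl⟩ ((hα.add_const e).eq_of_eqOn_Ico (hω.add_const e') hp hq h)

def ReadsAt (β : ℤ → Bool) (a : List Bool) (d : ℤ) : Prop :=
  ∀ i : ℕ, i < a.length → β (d + i) = a.getD i false

theorem readsAt_append_iff {β : ℤ → Bool} {u v : List Bool} {d : ℤ} :
    ReadsAt β (u ++ v) d ↔ ReadsAt β u d ∧ ReadsAt β v (d + u.length) := by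
  refine ⟨fun h => ⟨fun i hi => ?_, fun i hi => ?_⟩, fun ⟨hu, hv⟩ i hi => ?_⟩
  · rw [h i (by simp; omega), List.getD_append _ _ _ _ hi]
  · rw [add_assoc, ← Nat.cast_add, h _ (by simp; omega), List.getD_append_right _ _ _ _ (by omega),
      Nat.add_sub_cancel_left]
  · rcases lt_or_ge i u.length with hiu | hiu
    · rw [hu i hiu, List.getD_append _ _ _ _ hiu]
    · obtain ⟨j, rfl⟩ := Nat.exists_eq_add_of_le hiu
      rw [Nat.cast_add, ← add_assoc, hv j (by simp at hi; omega),
        List.getD_append_right _ _ _ _ hiu, Nat.add_sub_cancel_left]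

theorem readsAt_periodicOfList (L : List Bool) (q : ℤ) :
    ReadsAt (periodicOfList L) L (q * L.length) := fun i hi => by
  have hmod : (q * L.length + i) % (L.length : ℤ) = i := by
    rw [Int.mul_add_emod_self_right]
    exact Int.emod_eq_of_lt (by omega) (by omega)
  simp only [periodicOfList, hmod, Int.toNat_natCast]

theorem readsAt_flatten_replicate (w : List Bool) (m : ℕ) (q : ℤ) :
    ReadsAt (periodicOfList w) (List.replicate m w).flatten (q * w.length) := by
  induction m generalizing q with
  | zero => intro i hi; simp at hi
  | succ m ih =>
    rw [List.replicate_succ, List.flatten_cons, readsAt_append_iff]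
    exact ⟨readsAt_periodicOfList w q, by simpa [add_mul] using ih (q + 1)⟩

theorem ReadsAt.eqOn {β γ : ℤ → Bool} {a : List Bool} {d d' : ℤ} (hβ : ReadsAt β a d)
    (hγ : ReadsAt γ a d') : EqOn β (shiftZ (d' - d) γ) (Ico d (d + a.length)) := by
  rintro x ⟨hdx, hxd⟩
  obtain ⟨i, rfl⟩ : ∃ i : ℕ, x = d + i := ⟨(x - d).toNat, by omega⟩
  rw [hβ i (by omega), ← hγ i (by omega), shiftZ]
  ring_nf

theorem RunsOK.lt_of_isZeroRun {T : ℕ} {a : List Bool} {β : ℤ → Bool} {d x y : ℤ}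
    (ha : RunsOK T a) (hβ : ReadsAt β a d) (hrun : IsZeroRun β x y) (hdx : d ≤ x)
    (hyd : y < d + a.length) : (T : ℤ) < y - x := by
  obtain ⟨hx, hy, hxy, hzero⟩ := hrun
  have read : ∀ n : ℕ, (n : ℤ) = x - d ∨ (n : ℤ) = y - d ∨ (x - d < n ∧ n < y - d) →
      a.getD n false = β (d + n) := fun n hn => (hβ n (by omega)).symm
  have hrun := ha ((x - d).toNat + 1) (y - x - 1).toNat (by omega) (by omega)
    (fun j hj => by rw [read _ (by omega)]; exact hzero _ (by omega) (by omega))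
    (Or.inr (by rw [read _ (by omega)]; convert hx using 2; omega))
    (Or.inr (by rw [read _ (by omega)]; convert hy using 2; omega))
  omega

theorem RunsOK.not_eqOn_periodic {T : ℕ} {a : List Bool} {β f : ℤ → Bool} {p d c : ℤ}
    (ha : RunsOK T a) (hβ : ReadsAt β a d) (hf : Periodic f p) (hp : 0 < p) (hpT : p ≤ T)
    (htrue : ∃ u, f u = true) (hfalse : ∃ v, f v = false)
    (hc : Ico c (c + 2 * p) ⊆ Ico d (d + a.length)) : ¬ EqOn f β (Ico c (c + 2 * p)) := by
  intro hfβ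
  obtain ⟨x, y, hcx, hyc, hyx, hrun⟩ := hf.exists_isZeroRun hp htrue hfalse c
  have hx : x ∈ Ico c (c + 2 * p) := ⟨hcx, by linarith [hrun.2.2.1]⟩
  have hy : y ∈ Ico c (c + 2 * p) := ⟨by linarith [hrun.2.2.1], hyc⟩
  have := ha.lt_of_isZeroRun hβ (hrun.congr (hfβ.mono (Icc_subset_Ico hcx hyc))) (hc hx).1 (hc hy).2
  omega

theorem exists_window_readsAt {u v w : List Bool} {h : ℤ} (hh : 0 < h) (hu : h ≤ u.length)
    (hv : h ≤ v.length) (hw : h ≤ w.length) (y : ℤ) :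
    ∃ a ∈ [u, v, w], ∃ c d, Ico c (c + h) ⊆ Ico y (y + 2 * h) ∧
      Ico c (c + h) ⊆ Ico d (d + a.length) ∧ ReadsAt (periodicOfList (u ++ v ++ w)) a d := by
  have block (a : List Bool) (ha : a ∈ [u, v, w]) (d : ℤ)
      (hread : ReadsAt (periodicOfList (u ++ v ++ w)) a d) (hlen : h ≤ a.length)
      (hd : d ≤ y + h) (hd' : y + h < d + a.length) :
      ∃ a ∈ [u, v, w], ∃ c d, Ico c (c + h) ⊆ Ico y (y + 2 * h) ∧
        Ico c (c + h) ⊆ Ico d (d + a.length) ∧ ReadsAt (periodicOfList (u ++ v ++ w)) a d :=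
    -- the block at `d` contains the midpoint `y + h`, so it contains `[max y d, max y d + h)`
    ⟨a, ha, max y d, d, Ico_subset_Ico (le_max_left _ _) (by omega),
      Ico_subset_Ico (le_max_right _ _) (by omega), hread⟩
  have hread (q : ℤ) := readsAt_periodicOfList (u ++ v ++ w) q
  simp only [readsAt_append_iff, List.length_append, Nat.cast_add, add_assoc] at hread
  set N : ℤ := u.length + (v.length + w.length)
  have hq₀ := Int.ediv_mul_le y (show N ≠ 0 by omega)
  have hq₁ := Int.lt_ediv_add_one_mul_self y (show 0 < N by omega)
  set q := y / N
  obtain ⟨⟨h₀u, h₀v⟩, h₀w⟩ := hread q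
  obtain ⟨⟨h₁u, -⟩, -⟩ := hread (q + 1)
  rw [add_one_mul] at hq₁ h₁u
  by_cases c₁ : y + h < q * N + u.length
  · exact block u (by simp) _ h₀u hu (by omega) c₁
  by_cases c₂ : y + h < q * N + (u.length + v.length)
  · exact block v (by simp) _ h₀v hv (by omega) (by omega)
  by_cases c₃ : y + h < q * N + N
  · exact block w (by simp) _ h₀w hw (by omega) (by omega)
  · exact block u (by simp) _ h₁u hu (by omega) (by omega)

/-- Lemma 5: let `α` be periodic with minimal period `T₁`, `2 < T₁ ≤ T`, and let `ω₃` be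
the minimal-period word of a periodic sequence whose orbit is disjoint from `O(α,σ)`,
with `|ω₃| = T₃ ≤ T₁`.  If `β` is the periodic repetition of `a₁ ω₃ᵐ a₂` with `m > 4T`
and `a₁, a₂` words of length `> 4T` in which every maximal run of zeros has length
`≥ T`, then no stretch of `β` of length `4T₁` agrees with a stretch of `α`. -/
theorem avoid_cylinders_of_periodic_word
    (T : ℕ) (α : ℤ → Bool) (T₁ : ℕ) (hα : IsMinPeriod T₁ α)
    (hT₁ : 2 < T₁) (hT₁T : T₁ ≤ T)
    (ω₃ : List Bool) (T₃ : ℕ) (hlen : ω₃.length = T₃) (hT₃ : T₃ ≤ T₁)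
    (hmin : IsMinPeriod T₃ (periodicOfList ω₃))
    (hdisj : Disjoint (orbitShift α) (orbitShift (periodicOfList ω₃)))
    (m : ℕ) (hm : 4 * T < m)
    (a₁ a₂ : List Bool) (ha₁ : 4 * T < a₁.length) (ha₂ : 4 * T < a₂.length)
    (hr₁ : RunsOK T a₁) (hr₂ : RunsOK T a₂)
    (β : ℤ → Bool)
    (hβ : β = periodicOfList (a₁ ++ (List.replicate m ω₃).flatten ++ a₂)) :
    ∀ k l : ℤ, ∃ j : ℤ, -2 * (T₁ : ℤ) ≤ j ∧ j ≤ 2 * (T₁ : ℤ) - 1 ∧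
      β (k + j) ≠ α (l + j) := by
  intro k l
  by_contra! hcon
  have hαper : Periodic α T₁ := fun x => congrFun hα.2.1 x
  have hωper : Periodic (periodicOfList ω₃) T₃ := fun x => congrFun hmin.2.1 x
  have hγβ : EqOn (shiftZ (l - k) α) β (Ico (k - 2 * T₁) (k - 2 * T₁ + 2 * (2 * T₁))) := by
    rintro x ⟨hx₀, hx₁⟩
    have h := hcon (x - k) (by omega) (by omega)
    rw [shiftZ, show x + (l - k) = l + (x - k) by ring, ← h, add_sub_cancel]
  have hγ (b : Bool) : ∃ u, shiftZ (l - k) α u = b := by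
    obtain ⟨u, hu⟩ := hα.exists_eq (by omega) b
    exact ⟨u - (l - k), by simpa [shiftZ] using hu⟩
  have hF : 2 * T₁ ≤ ((List.replicate m ω₃).flatten).length := by
    simp only [List.length_flatten, List.map_replicate, List.sum_replicate, smul_eq_mul, hlen]
    nlinarith [hmin.1]
  obtain ⟨a, ha, c, d, hcy, hcd, hread⟩ := exists_window_readsAt (u := a₁) (w := a₂)
    (h := 2 * T₁) (by omega) (by omega) (by exact_mod_cast hF) (by omega) (k - 2 * T₁)
  rw [← hβ] at hread
  have hwin := hγβ.mono hcy
  simp only [List.mem_cons, List.not_mem_nil, or_false] at ha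
  rcases ha with rfl | rfl | rfl
  · exact hr₁.not_eqOn_periodic hread (hαper.add_const _) (by omega) (by omega) (hγ true)
      (hγ false) hcd hwin
  · have hω := hread.eqOn (readsAt_flatten_replicate ω₃ m 0)
    rw [zero_mul, zero_sub] at hω
    exact not_eqOn_shiftZ_of_disjoint hdisj hαper hωper (by omega) (by exact_mod_cast hmin.1)
      (l - k) (-d) c ((hwin.trans (hω.mono hcd)).mono (Ico_subset_Ico_right (by omega)))
  · exact hr₂.not_eqOn_periodic hread (hαper.add_const _) (by omega) (by omega) (hγ true)
      (hγ false) hcd hwin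
end
end

section
/- (Lemma on the errors.) Let C > 0, α > 0 and 1 < L < 2^α, and let g₀, g₁ be homeomorphisms of S¹. Then there exists K > 0, depending only on C, α and L (in particular independent of δ), such that for every δ ∈ (0,1) and every family (f_ω)_{ω∈Σ²} of homeomorphisms of S¹ satisfying: (i) d_{C⁰}(f_ω, g_{ω₀}) ≤ δ for every ω (where ω₀ is the symbol of ω at position 0); (ii) f_ω and f_ω^{−1} are Lipschitz with constant L for every ω; (iii) d_{C⁰}(f_ω, f_{ω′}) ≤ C · d_{Σ²}(ω,ω′)^α for all ω, ω′; the following holds: for every m ∈ ℕ and all ω, ω′ ∈ Σ² with d_{Σ²}(ω,ω′) ≤ 2^{−m}, one has d_{C⁰}(f̄_m[ω], f̄_m[ω′]) ≤ K·δ^β and d_{C⁰}(f̄_{−m}[ω], f̄_{−m}[ω′]) ≤ K·δ^β, where β = 1 − (ln L)/(α ln 2). -/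
/-!
Write `dⱼ` for the distance between `f̄ⱼ[ω] φ` and `f̄ⱼ[ω'] φ`. Since every `f_ω` is
`L`-Lipschitz, `dⱼ₊₁ ≤ L dⱼ + eⱼ`, where `eⱼ` is the distance between `f_{σʲω}` and `f_{σʲω'}`.
These two shifted sequences share their zeroth symbol, so `eⱼ ≤ 2δ` (both are `δ`-close to the
same `g`), and they agree on a window of size `m - 1 - j`, so `eⱼ ≤ C 2^{-α(m-1-j)}`.
Hence `dₘ ≤ ∑ⱼ Lʲ min (2δ, C 2^{-αj})`. Cut the sum at `N ≈ log(1/δ) / (α log 2)`, so that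
`2^{-αN} ≈ δ` and `L^N ≈ δ^{β-1}`: the head is at most `2δ L^N/(L-1) ≲ δ^β` and, as
`L 2^{-α} < 1`, the tail is a geometric series of size `≲ (L 2^{-α})^N ≈ δ^β`.
Backward compositions are the same, the inverses being `L`-Lipschitz as well.
-/

open Filter Metric

noncomputable section

/-- The circle `S¹ = ℝ/ℤ`. -/
abbrev S1 := UnitAddCircle

/-- The metric on `Σ²`. -/
def dSigma (ω ω' : ℤ → Bool) : ℝ :=
  sSup ((fun k : ℕ => (2 : ℝ) ^ (-(k : ℤ))) ''
    {k : ℕ | ω (-(k : ℤ) - 1) ≠ ω' (-(k : ℤ) - 1) ∨ ω (k : ℤ) ≠ ω' (k : ℤ)})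

/-- Forward fibre compositions: `f̄_m[ω] = f_{σ^{m-1}ω} ∘ … ∘ f_{σω} ∘ f_ω`. -/
def fbarP (f : (ℤ → Bool) → (S1 ≃ₜ S1)) : ℕ → (ℤ → Bool) → (S1 ≃ₜ S1)
  | 0, _ => Homeomorph.refl S1
  | m + 1, ω => (fbarP f m ω).trans (f (shiftZ (m : ℤ) ω))

/-- Backward fibre compositions: `f̄_{-m}[ω] = f_{σ^{-m}ω}⁻¹ ∘ … ∘ f_{σ^{-1}ω}⁻¹`. -/
def fbarM (f : (ℤ → Bool) → (S1 ≃ₜ S1)) : ℕ → (ℤ → Bool) → (S1 ≃ₜ S1)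
  | 0, _ => Homeomorph.refl S1
  | m + 1, ω => (fbarM f m ω).trans (f (shiftZ (-(m : ℤ) - 1) ω)).symm

open Finset

section SymbolicDistance

lemma dSigma_nonneg (ω ω' : ℤ → Bool) : 0 ≤ dSigma ω ω' :=
  Real.sSup_nonneg (by rintro x ⟨k, -, rfl⟩; positivity)

lemma dSigma_le_two_zpow_iff {ω ω' : ℤ → Bool} {M : ℕ} :
    dSigma ω ω' ≤ 2 ^ (-(M : ℤ)) ↔ ∀ k : ℤ, -(M : ℤ) ≤ k → k < M → ω k = ω' k := by
  constructor
  · intro h k hk₁ hk₂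
    by_contra hne
    -- a disagreement at `k` is recorded in `dSigma` at index `n`, with `k = n` or `k = -n-1`
    obtain ⟨n, hnM, hn⟩ : ∃ n : ℕ, (n : ℤ) < M ∧
        (ω (-(n : ℤ) - 1) ≠ ω' (-(n : ℤ) - 1) ∨ ω n ≠ ω' n) := by
      rcases le_or_gt 0 k with hk | hk
      · exact ⟨k.toNat, by omega, Or.inr (by rwa [Int.toNat_of_nonneg hk])⟩
      · refine ⟨(-k - 1).toNat, by omega, Or.inl ?_⟩
        rwa [Int.toNat_of_nonneg (by omega), show -(-k - 1) - 1 = k by ring]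
    have hbdd : BddAbove ((fun k : ℕ => (2 : ℝ) ^ (-(k : ℤ))) ''
        {k : ℕ | ω (-(k : ℤ) - 1) ≠ ω' (-(k : ℤ) - 1) ∨ ω (k : ℤ) ≠ ω' (k : ℤ)}) :=
      ⟨1, by rintro x ⟨j, -, rfl⟩; exact zpow_le_one_of_nonpos₀ (by norm_num) (by omega)⟩
    have hlt : (2 : ℝ) ^ (-(M : ℤ)) < 2 ^ (-(n : ℤ)) := zpow_lt_zpow_right₀ (by norm_num) (by omega)
    exact (hlt.trans_le (le_csSup hbdd ⟨n, hn, rfl⟩)).not_ge h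
  · intro h
    refine Real.sSup_le ?_ (by positivity)
    rintro x ⟨k, hk, rfl⟩
    have hkM : (M : ℤ) ≤ k := by
      by_contra! hlt
      rcases hk with hk | hk
      · exact hk (h _ (by omega) (by omega))
      · exact hk (h _ (by omega) (by omega))
    exact zpow_le_zpow_right₀ (by norm_num) (by omega)

variable {ω ω' : ℤ → Bool} {M : ℕ} {n : ℤ}

lemma shiftZ_apply_zero_eq_of_dSigma_le (h : dSigma ω ω' ≤ 2 ^ (-(M : ℤ)))
    (hn₁ : -(M : ℤ) ≤ n) (hn₂ : n < M) : shiftZ n ω 0 = shiftZ n ω' 0 :=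
  dSigma_le_two_zpow_iff.1 h _ (by omega) (by omega)

lemma dSigma_shiftZ_le_of_dSigma_le {k : ℕ} (h : dSigma ω ω' ≤ 2 ^ (-(M : ℤ)))
    (hk₁ : -(M : ℤ) ≤ n - k) (hk₂ : n + k ≤ M) :
    dSigma (shiftZ n ω) (shiftZ n ω') ≤ 2 ^ (-(k : ℤ)) :=
  dSigma_le_two_zpow_iff.2 fun _ _ _ => dSigma_le_two_zpow_iff.1 h _ (by omega) (by omega)

end SymbolicDistance

lemma dist_apply_le_min_of_dSigma_le {X : Type*} [PseudoMetricSpace X]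
    {f : (ℤ → Bool) → X → X} {g : Bool → X → X} {δ C α : ℝ}
    (hg : ∀ ω x, dist (f ω x) (g (ω 0) x) ≤ δ) (hC : 0 ≤ C) (hα : 0 ≤ α)
    (hf : ∀ ω ω' x, dist (f ω x) (f ω' x) ≤ C * dSigma ω ω' ^ α)
    {ω ω' : ℤ → Bool} {n : ℕ} (h₀ : ω 0 = ω' 0) (hd : dSigma ω ω' ≤ 2 ^ (-(n : ℤ))) (x : X) :
    dist (f ω x) (f ω' x) ≤ min (2 * δ) (C * ((2 : ℝ) ^ (-α)) ^ n) := by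
  refine le_min ?_ ?_
  · calc dist (f ω x) (f ω' x) ≤ dist (f ω x) (g (ω 0) x) + dist (f ω' x) (g (ω' 0) x) := by
          rw [h₀]; exact dist_triangle_right _ _ _
      _ ≤ 2 * δ := by linarith [hg ω x, hg ω' x]
  · calc dist (f ω x) (f ω' x) ≤ C * dSigma ω ω' ^ α := hf ω ω' x
      _ ≤ C * ((2 : ℝ) ^ (-(n : ℤ))) ^ α := by gcongr; exact dSigma_nonneg ω ω'
      _ = C * ((2 : ℝ) ^ (-α)) ^ n := by
        rw [zpow_neg, zpow_natCast, Real.inv_rpow (by positivity), Real.rpow_neg zero_le_two,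
          inv_pow, ← Real.rpow_natCast_mul zero_le_two, mul_comm (n : ℝ),
          Real.rpow_mul_natCast zero_le_two]

lemma sum_pow_mul_min_le {L r a b : ℝ} (hL : 1 < L) (hr : 0 ≤ r) (hLr : L * r < 1)
    (ha : 0 ≤ a) (hb : 0 ≤ b) (M N : ℕ) :
    ∑ j ∈ range M, L ^ j * min a (b * r ^ j) ≤
      a * (L ^ N / (L - 1)) + b * ((L * r) ^ N / (1 - L * r)) := by
  have hL0 : 0 ≤ L := by linarith
  calc ∑ j ∈ range M, L ^ j * min a (b * r ^ j)
      ≤ ∑ j ∈ range (max M N), L ^ j * min a (b * r ^ j) :=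
        sum_le_sum_of_subset_of_nonneg (range_subset_range.2 (le_max_left _ _))
          fun _ _ _ => by positivity
    _ = ∑ j ∈ range N, L ^ j * min a (b * r ^ j) +
          ∑ j ∈ Ico N (max M N), L ^ j * min a (b * r ^ j) :=
        (sum_range_add_sum_Ico _ (le_max_right _ _)).symm
    _ ≤ ∑ j ∈ range N, a * L ^ j + ∑ j ∈ Ico N (max M N), b * (L * r) ^ j := by
        refine add_le_add (sum_le_sum fun j _ => ?_) (sum_le_sum fun j _ => ?_)
        · calc L ^ j * min a (b * r ^ j) ≤ L ^ j * a :=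
                mul_le_mul_of_nonneg_left (min_le_left _ _) (pow_nonneg hL0 j)
            _ = a * L ^ j := mul_comm _ _
        · calc L ^ j * min a (b * r ^ j) ≤ L ^ j * (b * r ^ j) :=
                mul_le_mul_of_nonneg_left (min_le_right _ _) (pow_nonneg hL0 j)
            _ = b * (L * r) ^ j := by ring
    _ = a * ∑ j ∈ range N, L ^ j + b * ∑ j ∈ Ico N (max M N), (L * r) ^ j := by
        rw [mul_sum, mul_sum]
    _ ≤ a * (L ^ N / (L - 1)) + b * ((L * r) ^ N / (1 - L * r)) := by
        gcongr
        · rw [geom_sum_eq hL.ne']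
          gcongr
          linarith
        · exact geom_sum_Ico_le_of_lt_one (by positivity) hLr

lemma exists_pow_le_and_pow_le_rpow {ρ L δ : ℝ} (hρ₀ : 0 < ρ) (hρ₁ : ρ < 1) (hL : 1 ≤ L)
    (hδ₀ : 0 < δ) (hδ₁ : δ ≤ 1) :
    ∃ N : ℕ, ρ ^ N ≤ δ ∧ L ^ N ≤ L * δ ^ (Real.log L / Real.log ρ) := by
  have hlogρ : Real.log ρ < 0 := Real.log_neg hρ₀ hρ₁
  set x := Real.log δ / Real.log ρ
  have hx : 0 ≤ x := div_nonneg_of_nonpos (Real.log_nonpos hδ₀.le hδ₁) hlogρ.le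
  refine ⟨⌈x⌉₊, ?_, ?_⟩
  · calc ρ ^ ⌈x⌉₊ = ρ ^ (⌈x⌉₊ : ℝ) := (Real.rpow_natCast _ _).symm
      _ ≤ ρ ^ x := Real.rpow_le_rpow_of_exponent_ge hρ₀ hρ₁.le (Nat.le_ceil x)
      _ = δ := by
        rw [Real.rpow_def_of_pos hρ₀, mul_div_cancel₀ _ hlogρ.ne, Real.exp_log hδ₀]
  · calc L ^ ⌈x⌉₊ = L ^ (⌈x⌉₊ : ℝ) := (Real.rpow_natCast _ _).symm
      _ ≤ L ^ (x + 1) := Real.rpow_le_rpow_of_exponent_le hL (Nat.ceil_lt_add_one hx).le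
      _ = L * δ ^ (Real.log L / Real.log ρ) := by
        rw [Real.rpow_add (by linarith), Real.rpow_one, mul_comm, Real.rpow_def_of_pos hδ₀,
          Real.rpow_def_of_pos (by linarith)]
        congr 2
        ring

lemma sum_pow_mul_min_le_rpow {L ρ b c δ : ℝ} (hL : 1 < L) (hρ : 0 < ρ) (hLρ : L * ρ < 1)
    (hb : 0 ≤ b) (hc : 0 ≤ c) (hδ₀ : 0 < δ) (hδ₁ : δ ≤ 1) (M : ℕ) :
    ∑ j ∈ range M, L ^ j * min (c * δ) (b * ρ ^ j) ≤
      (c * L / (L - 1) + b * L / (1 - L * ρ)) * δ ^ (1 + Real.log L / Real.log ρ) := by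
  have hρ₁ : ρ < 1 := by nlinarith
  obtain ⟨N, hρN, hLN⟩ := exists_pow_le_and_pow_le_rpow hρ hρ₁ hL.le hδ₀ hδ₁
  have hLρN : (L * ρ) ^ N ≤ L * δ ^ (Real.log L / Real.log ρ) * δ := by
    rw [mul_pow]; gcongr
  calc ∑ j ∈ range M, L ^ j * min (c * δ) (b * ρ ^ j)
      ≤ c * δ * (L ^ N / (L - 1)) + b * ((L * ρ) ^ N / (1 - L * ρ)) :=
        sum_pow_mul_min_le hL hρ.le hLρ (by positivity) hb M N
    _ ≤ c * δ * (L * δ ^ (Real.log L / Real.log ρ) / (L - 1)) +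
          b * (L * δ ^ (Real.log L / Real.log ρ) * δ / (1 - L * ρ)) := by
        have : 0 < L - 1 := by linarith
        have : 0 < 1 - L * ρ := by linarith
        gcongr
    _ = (c * L / (L - 1) + b * L / (1 - L * ρ)) * δ ^ (1 + Real.log L / Real.log ρ) := by
        rw [Real.rpow_add hδ₀, Real.rpow_one]
        ring

lemma exists_sum_pow_mul_min_le_rpow {C α L : ℝ} (hC : 0 ≤ C) (hL : 1 < L)
    (hL2 : L < (2 : ℝ) ^ α) :
    ∃ X > 0, ∀ δ, 0 < δ → δ ≤ 1 → ∀ M : ℕ,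
      ∑ j ∈ range M, L ^ j * min (2 * δ) (C * ((2 : ℝ) ^ (-α)) ^ j) ≤
        X * δ ^ (1 - Real.log L / (α * Real.log 2)) := by
  have hLρ : L * (2 : ℝ) ^ (-α) < 1 := by
    rwa [Real.rpow_neg zero_le_two, ← div_eq_mul_inv, div_lt_one (by positivity)]
  refine ⟨2 * L / (L - 1) + C * L / (1 - L * 2 ^ (-α)),
    add_pos_of_pos_of_nonneg (div_pos (by linarith) (by linarith))
      (div_nonneg (by positivity) (by linarith)),
    fun δ hδ₀ hδ₁ M => ?_⟩
  convert sum_pow_mul_min_le_rpow hL (by positivity) hLρ hC zero_le_two hδ₀ hδ₁ M using 3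
  rw [Real.log_rpow two_pos]
  ring

section FibreCompositions

open scoped NNReal

lemma le_sum_pow_mul_of_succ_le {u ε : ℕ → ℝ} {K : ℝ} (hK : 0 ≤ K) (h₀ : u 0 ≤ 0) {m : ℕ}
    (h : ∀ j < m, u (j + 1) ≤ K * u j + ε j) :
    u m ≤ ∑ j ∈ range m, K ^ (m - 1 - j) * ε j := by
  induction m with
  | zero => simpa using h₀
  | succ m ih =>
    calc u (m + 1) ≤ K * u m + ε m := h m m.lt_succ_self
      _ ≤ K * ∑ j ∈ range m, K ^ (m - 1 - j) * ε j + ε m := by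
        gcongr
        exact ih fun j hj => h j (hj.trans m.lt_succ_self)
      _ = ∑ j ∈ range (m + 1), K ^ (m + 1 - 1 - j) * ε j := by
        rw [sum_range_succ, mul_sum, Nat.add_sub_cancel, Nat.sub_self, pow_zero, one_mul]
        congr 1
        refine sum_congr rfl fun j hj => ?_
        rw [← mul_assoc, ← pow_succ', show m - 1 - j + 1 = m - j by
          have := mem_range.1 hj; omega]

variable {X : Type*} [PseudoMetricSpace X]

lemma LipschitzWith.dist_apply_le_add {K : ℝ≥0} {F G : X → X} (hF : LipschitzWith K F)
    (x y : X) : dist (F x) (G y) ≤ K * dist x y + dist (F y) (G y) :=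
  (dist_triangle _ (F y) _).trans (add_le_add (hF.dist_le_mul x y) le_rfl)

lemma Homeomorph.dist_symm_apply_le {K : ℝ≥0} {ε : ℝ} {F G : X ≃ₜ X}
    (hF : LipschitzWith K F.symm) (h : ∀ x, dist (F x) (G x) ≤ ε) (y : X) :
    dist (F.symm y) (G.symm y) ≤ K * ε :=
  calc dist (F.symm y) (G.symm y) = dist (F.symm y) (F.symm (F (G.symm y))) := by
        rw [F.symm_apply_apply]
    _ ≤ K * dist y (F (G.symm y)) := hF.dist_le_mul _ _
    _ ≤ K * ε := by
        gcongr
        rw [dist_comm]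
        simpa only [G.apply_symm_apply] using h (G.symm y)

variable {f : (ℤ → Bool) → (S1 ≃ₜ S1)} {K : ℝ≥0} {ω ω' : ℤ → Bool} {m : ℕ} {ε : ℕ → ℝ}

lemma dist_fbarP_le (hf : ∀ ω, LipschitzWith K (f ω))
    (hε : ∀ j < m, ∀ φ, dist (f (shiftZ j ω) φ) (f (shiftZ j ω') φ) ≤ ε (m - 1 - j)) (φ : S1) :
    dist (fbarP f m ω φ) (fbarP f m ω' φ) ≤ ∑ j ∈ range m, (K : ℝ) ^ j * ε j :=
  (le_sum_pow_mul_of_succ_le (u := fun j => dist (fbarP f j ω φ) (fbarP f j ω' φ))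
    K.coe_nonneg (by simp [fbarP]) fun j hj =>
      ((hf _).dist_apply_le_add (G := f (shiftZ j ω')) _ _).trans
        (add_le_add le_rfl (hε j hj _))).trans_eq
    (sum_range_reflect (fun j => (K : ℝ) ^ j * ε j) m)

lemma dist_fbarM_le (hf : ∀ ω, LipschitzWith K (f ω).symm)
    (hε : ∀ j < m, ∀ φ,
      dist (f (shiftZ (-j - 1) ω) φ) (f (shiftZ (-j - 1) ω') φ) ≤ ε (m - 1 - j))
    (φ : S1) :
    dist (fbarM f m ω φ) (fbarM f m ω' φ) ≤ K * ∑ j ∈ range m, (K : ℝ) ^ j * ε j := by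
  refine (le_sum_pow_mul_of_succ_le (u := fun j => dist (fbarM f j ω φ) (fbarM f j ω' φ))
    K.coe_nonneg (by simp [fbarM]) fun j hj =>
      ((hf _).dist_apply_le_add (G := (f (shiftZ (-j - 1) ω')).symm) _ _).trans
        (add_le_add le_rfl (Homeomorph.dist_symm_apply_le (hf _) (hε j hj) _))).trans_eq ?_
  rw [mul_sum, ← sum_range_reflect (fun j => (K : ℝ) * ((K : ℝ) ^ j * ε j)) m]
  exact sum_congr rfl fun j _ => by ring

end FibreCompositions

/-- Lemma on the errors (Lemma 7): there is `K`, depending only on `C`, `α`, `L`, such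
that for every `δ ∈ (0,1)` and any family of circle homeomorphisms `f_ω` that is
`δ`-close in `C⁰` to `g_{ω₀}`, `L`-Lipschitz in both directions, and Hölder in `ω`,
sequences `ω, ω'` with `d(ω,ω') ≤ 2^{-m}` have `f̄_{±m}` within `Kδ^β` in `C⁰`, where
`β = 1 - ln L / (α ln 2)`. -/
theorem lemma_on_errors
    (C α L : ℝ) (hC : 0 < C) (hα : 0 < α) (hL : 1 < L) (hL2 : L < (2 : ℝ) ^ α)
    (g₀ g₁ : S1 ≃ₜ S1) :
    ∃ K : ℝ, 0 < K ∧
      ∀ δ : ℝ, 0 < δ → δ < 1 →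
        ∀ f : (ℤ → Bool) → (S1 ≃ₜ S1),
          (∀ ω (φ : S1), dist (f ω φ) ((if ω 0 then g₁ else g₀) φ) ≤ δ) →
          (∀ ω, LipschitzWith (Real.toNNReal L) (f ω) ∧
            LipschitzWith (Real.toNNReal L) (f ω).symm) →
          (∀ ω ω' (φ : S1), dist (f ω φ) (f ω' φ) ≤ C * dSigma ω ω' ^ α) →
          ∀ (m : ℕ) (ω ω' : ℤ → Bool), dSigma ω ω' ≤ (2 : ℝ) ^ (-(m : ℤ)) →
            (∀ φ : S1, dist (fbarP f m ω φ) (fbarP f m ω' φ) ≤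
              K * δ ^ (1 - Real.log L / (α * Real.log 2))) ∧
            (∀ φ : S1, dist (fbarM f m ω φ) (fbarM f m ω' φ) ≤
              K * δ ^ (1 - Real.log L / (α * Real.log 2))) := by
  obtain ⟨X, hX, hsum⟩ := exists_sum_pow_mul_min_le_rpow hC.le hL hL2
  refine ⟨L * X, by positivity, fun δ hδ₀ hδ₁ f hclose hLip hHolder m ω ω' hd => ?_⟩
  have hK : (Real.toNNReal L : ℝ) = L := Real.coe_toNNReal L (by linarith)
  have hstep : ∀ (n : ℤ) (k : ℕ), -(m : ℤ) ≤ n - k → n + k < m → ∀ φ,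
      dist (f (shiftZ n ω) φ) (f (shiftZ n ω') φ) ≤ min (2 * δ) (C * ((2 : ℝ) ^ (-α)) ^ k) :=
    fun n k h₁ h₂ => dist_apply_le_min_of_dSigma_le (f := fun ω => f ω)
      (g := fun b => ⇑(if b then g₁ else g₀)) hclose hC.le hα.le hHolder
      (shiftZ_apply_zero_eq_of_dSigma_le hd (by omega) (by omega))
      (dSigma_shiftZ_le_of_dSigma_le hd h₁ h₂.le)
  have hδ := hsum δ hδ₀ hδ₁.le m
  refine ⟨fun φ => ?_, fun φ => ?_⟩
  · calc dist (fbarP f m ω φ) (fbarP f m ω' φ)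
        ≤ ∑ j ∈ range m, L ^ j * min (2 * δ) (C * ((2 : ℝ) ^ (-α)) ^ j) := by
          rw [← hK]
          exact dist_fbarP_le (fun ω => (hLip ω).1)
            (fun j hj => hstep j (m - 1 - j) (by omega) (by omega)) φ
      _ ≤ L * X * δ ^ (1 - Real.log L / (α * Real.log 2)) := by
          rw [mul_assoc]
          exact hδ.trans (le_mul_of_one_le_left (by positivity) hL.le)
  · calc dist (fbarM f m ω φ) (fbarM f m ω' φ)
        ≤ L * ∑ j ∈ range m, L ^ j * min (2 * δ) (C * ((2 : ℝ) ^ (-α)) ^ j) := by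
          rw [← hK]
          exact dist_fbarM_le (fun ω => (hLip ω).2)
            (fun j hj => hstep (-j - 1) (m - 1 - j) (by omega) (by omega)) φ
      _ ≤ L * X * δ ^ (1 - Real.log L / (α * Real.log 2)) := by
          rw [mul_assoc]
          gcongr
end
end

section
/- Let (f_ω)_{ω∈Σ²} be a family of homeomorphisms of S¹ defining the mild skew product G on Σ² × S¹. Let α^p ∈ Σ² satisfy σ^{t_p}(α^p) = α^p for some t_p ∈ ℕ and let φ_p ∈ S¹ satisfy f̄_{t_p}[α^p](φ_p) = φ_p, so that p₄ = (α^p, φ_p) is a fixed point of G^{t_p}. Let γ > 0 and assume there is a set Δ_p ⊂ Σ² × S¹ such that: (a) every point x ∈ Σ² × S¹ whose positive semitrajectory under G^{t_p} is contained in Δ_p belongs to W^s(p₄) (the stable set of p₄ with respect to G^{t_p}); (b) {ω′ ∈ Σ² : ω′_k = (α^p)_k for all k ≥ 0} × N(2γ, φ_p) ⊂ Δ_p. Let K̄ ∈ ℤ and let ω ∈ Σ² satisfy ω_k = (α^p)_{k−K̄} for all k ≥ K̄, and suppose that for every m ∈ ℕ there exists φ^m ∈ S¹ with d_{S¹}(f̄_{w·t_p}[σ^{K̄}(ω)](φ^m),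 φ_p) ≤ γ for all 0 ≤ w ≤ 2m. Then there exists φ_ω ∈ S¹ with d_{S¹}(φ_ω, φ_p) ≤ γ such that (σ^{K̄}(ω), φ_ω) ∈ W^s(p₄). -/
open Filter Metric

noncomputable section

/-- The max-metric on `Σ² × S¹`. -/
def distP (x y : (ℤ → Bool) × S1) : ℝ := max (dSigma x.1 y.1) (dist x.2 y.2)

/-- The mild skew product `G(ω,φ) = (σω, f_ω(φ))`. -/
def skewG (f : (ℤ → Bool) → (S1 ≃ₜ S1)) : (ℤ → Bool) × S1 → (ℤ → Bool) × S1 :=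
  fun x => (shiftZ 1 x.1, f x.1 x.2)

/-- The stable set of the `G^{t_p}`-fixed point `p₄` in `Σ² × S¹` with the max-metric:
points whose `G^{t_p}`-iterates converge to `p₄`.  (Since `p₄` is fixed, its orbit is
`{p₄}`, so this agrees with the general definition of `W^s`.) -/
def wsFixed (f : (ℤ → Bool) → (S1 ≃ₜ S1)) (tp : ℕ) (p₄ : (ℤ → Bool) × S1) :
    Set ((ℤ → Bool) × S1) :=
  {q | Tendsto (fun k : ℕ => distP (((skewG f)^[tp])^[k] q) p₄) atTop (nhds 0)}

lemma shiftZ_shiftZ (a b : ℤ) (ω : ℤ → Bool) : shiftZ a (shiftZ b ω) = shiftZ (a + b) ω := by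
  funext k; simp [shiftZ, add_assoc]

lemma skewG_iterate (f : (ℤ → Bool) → (S1 ≃ₜ S1)) (m : ℕ) (x : (ℤ → Bool) × S1) :
    (skewG f)^[m] x = (shiftZ (m : ℤ) x.1, fbarP f m x.1 x.2) := by
  induction m with
  | zero =>
      have : shiftZ 0 x.1 = x.1 := by funext k; simp [shiftZ]
      simp [fbarP, this]
  | succ n ih =>
      rw [Function.iterate_succ_apply', ih]
      simp only [skewG, fbarP, Homeomorph.trans_apply, shiftZ_shiftZ]
      congr 2
      push_cast
      ring_nf

/-- Item (10.b), first part: if for every `m` there are points `γ`-shadowing `φ_p` for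
`2m` return times along `σ^{K̄}ω`, then there is a point `φ_ω` with
`(σ^{K̄}ω, φ_ω) ∈ W^s(p₄)`. -/
theorem limit_point_in_stable_set
    (f : (ℤ → Bool) → (S1 ≃ₜ S1))
    (αp : ℤ → Bool) (tp : ℕ) (htp : 0 < tp) (hαp : shiftZ (tp : ℤ) αp = αp)
    (φp : S1) (hφp : fbarP f tp αp φp = φp)
    (γ : ℝ) (hγ : 0 < γ)
    (Δp : Set ((ℤ → Bool) × S1))
    (hΔstable : ∀ x : (ℤ → Bool) × S1,
      (∀ k : ℕ, ((skewG f)^[tp])^[k] x ∈ Δp) → x ∈ wsFixed f tp (αp, φp))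
    (hΔbig : ∀ ω' : ℤ → Bool, (∀ k : ℤ, 0 ≤ k → ω' k = αp k) →
      ∀ φ ∈ ball φp (2 * γ), (ω', φ) ∈ Δp)
    (Kb : ℤ) (ω : ℤ → Bool)
    (hωpos : ∀ k : ℤ, Kb ≤ k → ω k = αp (k - Kb))
    (hφm : ∀ m : ℕ, ∃ φm : S1, ∀ w : ℕ, w ≤ 2 * m →
      dist (fbarP f (w * tp) (shiftZ Kb ω) φm) φp ≤ γ) :
    ∃ φω : S1, dist φω φp ≤ γ ∧ (shiftZ Kb ω, φω) ∈ wsFixed f tp (αp, φp) := by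
  -- choose the shadowing points
  choose φseq hφseq using hφm
  -- extract a convergent subsequence by compactness of S¹
  obtain ⟨φω, -, ψ, hψ, hψtend⟩ :=
    isCompact_univ.tendsto_subseq (x := φseq) (fun n => Set.mem_univ _)
  -- periodicity of αp
  have hper : ∀ (j : ℕ) (k : ℤ), αp (k + (j : ℤ) * (tp : ℤ)) = αp k := by
    intro j
    induction j with
    | zero => intro k; simp
    | succ n ih =>
        intro k
        have h1 : (k + ((n : ℤ) + 1) * (tp : ℤ)) = (k + (tp : ℤ)) + (n : ℤ) * (tp : ℤ) := by ring
        have h2 : αp (k + (tp : ℤ)) = αp k := by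
          conv_rhs => rw [← hαp]
          rfl
        push_cast
        rw [h1, ih, h2]
  -- uniform bound along the subsequence limit
  have hbound : ∀ w : ℕ, dist (fbarP f (w * tp) (shiftZ Kb ω) φω) φp ≤ γ := by
    intro w
    have hcont : Tendsto (fun j : ℕ => dist (fbarP f (w * tp) (shiftZ Kb ω) (φseq (ψ j))) φp)
        atTop (nhds (dist (fbarP f (w * tp) (shiftZ Kb ω) φω) φp)) := by
      exact (((fbarP f (w * tp) (shiftZ Kb ω)).continuous.tendsto φω).comp hψtend).dist
        tendsto_const_nhds
    refine le_of_tendsto hcont ?_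
    filter_upwards [eventually_ge_atTop w] with j hj
    exact hφseq (ψ j) w (by have : j ≤ ψ j := hψ.le_apply; omega)
  have hdistω : dist φω φp ≤ γ := by
    have := hbound 0
    simpa [fbarP] using this
  refine ⟨φω, hdistω, ?_⟩
  apply hΔstable
  intro k
  rw [← Function.iterate_mul, skewG_iterate]
  apply hΔbig
  · intro j hj
    rw [shiftZ_shiftZ]
    simp only [shiftZ]
    have h1 : ω (j + ((↑(tp * k) : ℤ) + Kb)) = αp (j + (↑(tp * k) : ℤ) + Kb - Kb) := by
      rw [← add_assoc]
      apply hωpos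
      have : (0 : ℤ) ≤ (↑(tp * k) : ℤ) := Int.natCast_nonneg _
      omega
    rw [h1]
    have h2 : j + (↑(tp * k) : ℤ) + Kb - Kb = j + (k : ℤ) * (tp : ℤ) := by push_cast; ring
    rw [h2, hper k j]
  · rw [mem_ball]
    calc dist (fbarP f (tp * k) (shiftZ Kb ω) φω) φp ≤ γ := by
          rw [mul_comm]; exact hbound k
      _ < 2 * γ := by linarith
end
end
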